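/- arXiv:2510.05427 — 2 statements merged into one kernel-verified Lean document; each statement's English description precedes it below -/
import Mathlib

section
/- For every Schwartz function φ : ℝ² → ℂ, lim_{ε→0⁺} ε ∫_{ℝ²} x φ(x,y) / ((x² + ε²)(y² + ε²)) dx dy = π · PVℓ(φ), where PVℓ(φ) = lim_{δ→0⁺} ∫_{|x|≥δ} φ(x,0)/x dx. -/
/-!
Substituting `y = εu` turns `ε ∫ φ(x, y) / (y² + ε²) dy` into the Cauchy mean
`∫ φ(x, εu) / (1 + u²) du`, which tends to `π φ(x, 0)`. Since `x / (x² + ε²)` is odd in `x`, the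
outer integral folds onto `x > 0` against the odd part `φ(x, v) - φ(-x, v)`. This is `O(|x|)`
near `0` by the mean value theorem and `O(1/|x|)` at infinity, so after multiplying by
`x / (x² + ε²) ≤ 1 / x` it is dominated by a multiple of `1 / (1 + x²)`, uniformly in `ε`.
Dominated convergence then gives `π ∫_{x > 0} (φ(x, 0) - φ(-x, 0)) / x`, and the same folding
identifies this integral with the principal value `L`.
-/

open MeasureTheory Filter Topology Set Real

theorem norm_le_of_forall_norm_le_mul_inv_one_add_sq {F E : Type*} [NormedAddCommGroup F]
    [NormedAddCommGroup E] {f : ℝ × F → E} {C : ℝ}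
    (hdecay : ∀ p, ‖f p‖ ≤ C * (1 + p.1 ^ 2)⁻¹) (p : ℝ × F) : ‖f p‖ ≤ C := by
  have hC : 0 ≤ C := by simpa using (norm_nonneg _).trans (hdecay 0)
  exact (hdecay p).trans (mul_le_of_le_one_right hC (inv_le_one_of_one_le₀ (by nlinarith)))

theorem abs_div_sq_add_sq_le {ε : ℝ} (hε : 0 < ε) (x : ℝ) :
    |x / (x ^ 2 + ε ^ 2)| ≤ (2 * ε)⁻¹ := by
  rw [abs_div, abs_of_pos (show 0 < x ^ 2 + ε ^ 2 by positivity), div_le_iff₀ (by positivity),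
    ← div_eq_inv_mul, le_div_iff₀ (by positivity)]
  nlinarith [sq_nonneg (|x| - ε), sq_abs x]

section Decay

variable {F E : Type*} [NormedAddCommGroup F] [NormedSpace ℝ F]
  [NormedAddCommGroup E] [NormedSpace ℝ E]

theorem SchwartzMap.exists_norm_fderiv_le (φ : SchwartzMap F E) :
    ∃ C, ∀ p, ‖fderiv ℝ φ p‖ ≤ C :=
  ⟨SchwartzMap.seminorm ℝ 0 1 φ, fun p => by
    simpa [← norm_iteratedFDeriv_fderiv] using φ.norm_iteratedFDeriv_le_seminorm ℝ 1 p⟩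

theorem SchwartzMap.exists_norm_le_mul_inv_one_add_sq_fst (φ : SchwartzMap (ℝ × F) E) :
    ∃ C, ∀ p : ℝ × F, ‖φ p‖ ≤ C * (1 + p.1 ^ 2)⁻¹ := by
  refine ⟨SchwartzMap.seminorm ℝ 0 0 φ + SchwartzMap.seminorm ℝ 2 0 φ, fun p => ?_⟩
  have hfst : p.1 ^ 2 ≤ ‖p‖ ^ 2 := by
    simpa only [Real.norm_eq_abs, sq_abs] using
      pow_le_pow_left₀ (norm_nonneg _) (norm_fst_le p) 2
  rw [← div_eq_mul_inv, le_div_iff₀ (by positivity)]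
  calc ‖φ p‖ * (1 + p.1 ^ 2) = ‖φ p‖ + p.1 ^ 2 * ‖φ p‖ := by ring
    _ ≤ SchwartzMap.seminorm ℝ 0 0 φ + ‖p‖ ^ 2 * ‖φ p‖ := by
      gcongr
      exact φ.norm_le_seminorm ℝ p
    _ ≤ _ := by
      gcongr
      exact φ.norm_pow_mul_le_seminorm ℝ 2 p

theorem norm_sub_comp_neg_fst_le {f : ℝ × F → E} (hf : Differentiable ℝ f) {C₁ C : ℝ}
    (hderiv : ∀ p, ‖fderiv ℝ f p‖ ≤ C₁) (hdecay : ∀ p, ‖f p‖ ≤ C * (1 + p.1 ^ 2)⁻¹)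
    (x : ℝ) (v : F) :
    ‖f (x, v) - f (-x, v)‖ ≤ 2 * (C₁ + C) * (|x| * (1 + x ^ 2)⁻¹) := by
  have hmvt : ‖f (x, v) - f (-x, v)‖ ≤ C₁ * (2 * |x|) := by
    have h := convex_univ.norm_image_sub_le_of_norm_fderiv_le (fun p _ => hf p)
      (fun p _ => hderiv p) (mem_univ (-x, v)) (mem_univ (x, v))
    have hnorm : ‖((x, v) : ℝ × F) - (-x, v)‖ = 2 * |x| := by
      rw [Prod.mk_sub_mk, sub_self, Prod.norm_mk, norm_zero, sub_neg_eq_add, ← two_mul,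
        Real.norm_eq_abs, abs_mul, abs_two, max_eq_left (by positivity)]
    rwa [hnorm] at h
  have hweight (a : ℝ) (ha : |a| = |x|) : |x| * ‖f (a, v)‖ ≤ C := by
    have h := hdecay (a, v)
    rw [← div_eq_mul_inv, le_div_iff₀ (by positivity)] at h
    have : |x| ≤ 1 + a ^ 2 := by nlinarith [sq_abs a, abs_nonneg a]
    nlinarith [norm_nonneg (f (a, v))]
  have htail : x ^ 2 * ‖f (x, v) - f (-x, v)‖ ≤ |x| * (2 * C) := by
    calc x ^ 2 * ‖f (x, v) - f (-x, v)‖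
        ≤ |x| * (|x| * ‖f (x, v)‖ + |x| * ‖f (-x, v)‖) := by
          rw [← sq_abs, sq, mul_assoc, ← mul_add]
          gcongr
          exact norm_sub_le _ _
      _ ≤ |x| * (2 * C) := by
          gcongr
          linarith [hweight x rfl, hweight (-x) (abs_neg x)]
  rw [← mul_assoc, ← div_eq_mul_inv, le_div_iff₀ (by positivity)]
  nlinarith

end Decay

variable {E : Type*} [NormedAddCommGroup E] [NormedSpace ℝ E]

theorem norm_inv_one_add_sq_smul_le {w : E} {B : ℝ} (hw : ‖w‖ ≤ B) (u : ℝ) :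
    ‖(1 + u ^ 2)⁻¹ • w‖ ≤ (1 + u ^ 2)⁻¹ * B := by
  rw [norm_smul, Real.norm_of_nonneg (by positivity)]
  exact mul_le_mul_of_nonneg_left hw (by positivity)

theorem norm_integral_inv_one_add_sq_smul_le {g : ℝ → E} {B : ℝ} (hg : ∀ u, ‖g u‖ ≤ B) :
    ‖∫ u, (1 + u ^ 2)⁻¹ • g u‖ ≤ π * B := by
  calc ‖∫ u, (1 + u ^ 2)⁻¹ • g u‖ ≤ ∫ u, (1 + u ^ 2)⁻¹ * B :=
        norm_integral_le_of_norm_le (integrable_inv_one_add_sq.mul_const B) <|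
          ae_of_all _ fun u => norm_inv_one_add_sq_smul_le (hg u) u
    _ = π * B := by rw [integral_mul_const, integral_univ_inv_one_add_sq]

theorem smul_integral_inv_sq_add_sq_smul_eq {ε : ℝ} (hε : 0 < ε) (g : ℝ → E) :
    ε • ∫ y, (y ^ 2 + ε ^ 2)⁻¹ • g y = ∫ u, (1 + u ^ 2)⁻¹ • g (ε * u) := by
  have h (u : ℝ) :
      (1 + u ^ 2)⁻¹ • g (ε * u) = ε ^ 2 • (((ε * u) ^ 2 + ε ^ 2)⁻¹ • g (ε * u)) := by
    rw [smul_smul]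
    congr 1
    field_simp
    ring
  simp_rw [h]
  rw [integral_smul, Measure.integral_comp_mul_left (fun y => (y ^ 2 + ε ^ 2)⁻¹ • g y),
    smul_smul, abs_of_pos (inv_pos.2 hε)]
  congr 1
  field_simp

theorem integral_eq_integral_Ioi_add_comp_neg {f : ℝ → E} (hf : Integrable f) :
    ∫ x, f x = ∫ x in Ioi 0, (f x + f (-x)) := by
  rw [← intervalIntegral.integral_Iic_add_Ioi hf.integrableOn hf.integrableOn,
    integral_add hf.integrableOn hf.comp_neg.integrableOn, add_comm, integral_comp_neg_Ioi,
    neg_zero]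

/-- For `ε > 0`, `cauchyMean f ε x = ε ∫ f(x, y) / (y² + ε²) dy`: `π` times the Poisson integral
of `f(x, ·)` at height `ε` above the origin. -/
noncomputable def cauchyMean (f : ℝ × ℝ → E) (ε x : ℝ) : E :=
  ∫ u, (1 + u ^ 2)⁻¹ • f (x, ε * u)

section CauchyMean

variable {f : ℝ × ℝ → E} {C : ℝ}

theorem cauchyMean_zero [CompleteSpace E] (x : ℝ) :
    cauchyMean f 0 x = π • f (x, 0) := by
  simp only [cauchyMean, zero_mul]
  rw [integral_smul_const, integral_univ_inv_one_add_sq]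

theorem norm_cauchyMean_le {x B : ℝ} (hB : ∀ v, ‖f (x, v)‖ ≤ B) (ε : ℝ) :
    ‖cauchyMean f ε x‖ ≤ π * B :=
  norm_integral_inv_one_add_sq_smul_le fun u => hB (ε * u)

theorem continuous_cauchyMean (hf : Continuous f) (hb : ∀ p, ‖f p‖ ≤ C) :
    Continuous fun q : ℝ × ℝ => cauchyMean f q.1 q.2 :=
  continuous_of_dominated (fun q => by fun_prop)
    (fun q => ae_of_all _ fun u => norm_inv_one_add_sq_smul_le (hb _) u)
    (integrable_inv_one_add_sq.mul_const C) (ae_of_all _ fun u => by fun_prop)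

theorem cauchyMean_sub_comp_neg (hf : Continuous f) (hb : ∀ p, ‖f p‖ ≤ C) (ε x : ℝ) :
    cauchyMean f ε x - cauchyMean f ε (-x) =
      cauchyMean (fun p => f p - f (-p.1, p.2)) ε x := by
  have hint (a : ℝ) : Integrable fun u : ℝ => (1 + u ^ 2)⁻¹ • f (a, ε * u) :=
    integrable_inv_one_add_sq.smul_bdd C (by fun_prop) (ae_of_all _ fun u => hb _)
  simp only [cauchyMean, smul_sub]
  exact (integral_sub (hint x) (hint (-x))).symm

theorem smul_integral_integral_eq_integral_Ioi_cauchyMean (hf : Continuous f)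
    (hdecay : ∀ p, ‖f p‖ ≤ C * (1 + p.1 ^ 2)⁻¹) {ε : ℝ} (hε : 0 < ε) :
    ε • ∫ x, ∫ y, (x / ((x ^ 2 + ε ^ 2) * (y ^ 2 + ε ^ 2))) • f (x, y) =
      ∫ x in Ioi 0, (x / (x ^ 2 + ε ^ 2)) • (cauchyMean f ε x - cauchyMean f ε (-x)) := by
  have hb := norm_le_of_forall_norm_le_mul_inv_one_add_sq hdecay
  have hinner (x : ℝ) : ε • ∫ y, (x / ((x ^ 2 + ε ^ 2) * (y ^ 2 + ε ^ 2))) • f (x, y) =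
      (x / (x ^ 2 + ε ^ 2)) • cauchyMean f ε x := by
    have hsplit (y : ℝ) : (x / ((x ^ 2 + ε ^ 2) * (y ^ 2 + ε ^ 2))) • f (x, y) =
        (x / (x ^ 2 + ε ^ 2)) • ((y ^ 2 + ε ^ 2)⁻¹ • f (x, y)) := by
      rw [smul_smul, ← div_eq_mul_inv, div_div]
    simp_rw [hsplit, integral_smul]
    rw [cauchyMean, ← smul_integral_inv_sq_add_sq_smul_eq hε (fun y => f (x, y)), smul_comm]
  have hint : Integrable fun x => (x / (x ^ 2 + ε ^ 2)) • cauchyMean f ε x := by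
    refine Integrable.mono' (integrable_inv_one_add_sq.const_mul ((2 * ε)⁻¹ * (π * C)))
      (Continuous.aestronglyMeasurable ?_) (ae_of_all _ fun x => ?_)
    · exact (continuous_id.div (by fun_prop) fun x => by positivity).smul
        ((continuous_cauchyMean hf hb).comp (continuous_const.prodMk continuous_id))
    · rw [norm_smul, Real.norm_eq_abs, mul_assoc, mul_assoc]
      exact mul_le_mul (abs_div_sq_add_sq_le hε x)
        (norm_cauchyMean_le (fun v => hdecay (x, v)) ε) (norm_nonneg _) (by positivity)
  rw [← integral_smul]
  simp_rw [hinner]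
  rw [integral_eq_integral_Ioi_add_comp_neg hint]
  congr 1 with x
  rw [neg_sq, neg_div, neg_smul, smul_sub, sub_eq_add_neg]

end CauchyMean

theorem tendsto_integral_Ioi_div_sq_add_sq_smul {Ψ : ℝ → ℝ → E} {b : ℝ → ℝ}
    (hb : IntegrableOn b (Ioi 0))
    (hmeas : ∀ ε, AEStronglyMeasurable (Ψ ε) (volume.restrict (Ioi 0)))
    (hbound : ∀ ε x, 0 < x → ‖Ψ ε x‖ ≤ x * b x)
    (hlim : ∀ x, 0 < x → Tendsto (fun ε => Ψ ε x) (𝓝[>] 0) (𝓝 (Ψ 0 x))) :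
    Tendsto (fun ε => ∫ x in Ioi 0, (x / (x ^ 2 + ε ^ 2)) • Ψ ε x) (𝓝[>] 0)
      (𝓝 (∫ x in Ioi 0, x⁻¹ • Ψ 0 x)) := by
  refine tendsto_integral_filter_of_dominated_convergence b
    (Eventually.of_forall fun ε => (Measurable.aestronglyMeasurable (by fun_prop)).smul (hmeas ε))
    (Eventually.of_forall fun ε => ?_) hb ?_
  · filter_upwards [ae_restrict_mem measurableSet_Ioi] with x (hx : 0 < x)
    have hkernel : x / (x ^ 2 + ε ^ 2) * x ≤ 1 := by
      rw [div_mul_eq_mul_div, div_le_one (by positivity)]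
      nlinarith [sq_nonneg ε]
    have hb_nonneg : 0 ≤ b x :=
      nonneg_of_mul_nonneg_right ((norm_nonneg _).trans (hbound ε x hx)) hx
    calc ‖(x / (x ^ 2 + ε ^ 2)) • Ψ ε x‖ ≤ x / (x ^ 2 + ε ^ 2) * (x * b x) := by
          rw [norm_smul, Real.norm_of_nonneg (by positivity)]
          exact mul_le_mul_of_nonneg_left (hbound ε x hx) (by positivity)
      _ ≤ b x := by nlinarith
  · filter_upwards [ae_restrict_mem measurableSet_Ioi] with x (hx : 0 < x)
    have hkernel : Tendsto (fun ε : ℝ => x / (x ^ 2 + ε ^ 2)) (𝓝[>] 0) (𝓝 x⁻¹) := by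
      have : ContinuousAt (fun ε : ℝ => x / (x ^ 2 + ε ^ 2)) 0 :=
        continuousAt_const.div (by fun_prop) (by positivity)
      simpa [sq, div_mul_cancel_right₀ hx.ne'] using this.tendsto.mono_left nhdsWithin_le_nhds
    exact hkernel.smul (hlim x hx)

theorem integrableOn_inv_smul_sub_comp_neg {g : ℝ → E} (hg : Continuous g) {A : ℝ}
    (hodd : ∀ x, ‖g x - g (-x)‖ ≤ A * (|x| * (1 + x ^ 2)⁻¹)) :
    IntegrableOn (fun x => x⁻¹ • (g x - g (-x))) (Ioi 0) := by
  refine Integrable.mono' (integrable_inv_one_add_sq.const_mul A).integrableOn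
    (measurable_inv.aestronglyMeasurable.smul (by fun_prop)) ?_
  filter_upwards [ae_restrict_mem measurableSet_Ioi] with x (hx : 0 < x)
  rw [norm_smul, norm_inv, Real.norm_of_nonneg hx.le, inv_mul_le_iff₀ hx, mul_left_comm]
  simpa only [abs_of_pos hx] using hodd x

theorem tendsto_integral_Ioi_smul_cauchyMean_sub_comp_neg [CompleteSpace E] {f : ℝ × ℝ → E}
    (hf : Continuous f) {C A : ℝ} (hb : ∀ p, ‖f p‖ ≤ C)
    (hodd : ∀ x v, ‖f (x, v) - f (-x, v)‖ ≤ A * (|x| * (1 + x ^ 2)⁻¹)) :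
    Tendsto
      (fun ε => ∫ x in Ioi 0, (x / (x ^ 2 + ε ^ 2)) • (cauchyMean f ε x - cauchyMean f ε (-x)))
      (𝓝[>] 0) (𝓝 (π • ∫ x in Ioi 0, x⁻¹ • (f (x, 0) - f (-x, 0)))) := by
  have hcont := continuous_cauchyMean hf hb
  have hlim := tendsto_integral_Ioi_div_sq_add_sq_smul
    (Ψ := fun ε x => cauchyMean f ε x - cauchyMean f ε (-x))
    (b := fun x => π * (A * (1 + x ^ 2)⁻¹))
    ((integrable_inv_one_add_sq.const_mul A).const_mul π).integrableOn
    (fun ε => Continuous.aestronglyMeasurable (by fun_prop))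
    (fun ε x hx => by
      rw [cauchyMean_sub_comp_neg hf hb, mul_left_comm, ← mul_assoc x, mul_comm x, mul_assoc]
      exact norm_cauchyMean_le (fun v => by simpa only [abs_of_pos hx] using hodd x v) ε)
    (fun x _ => (by fun_prop : Continuous fun ε => cauchyMean f ε x - cauchyMean f ε (-x))
      |>.continuousWithinAt.tendsto)
  simpa only [cauchyMean_zero, ← smul_sub, smul_comm _ π, integral_smul] using hlim

theorem setIntegral_le_abs_inv_smul_eq {g : ℝ → E} (hg : Integrable g) {δ : ℝ} (hδ : 0 < δ) :
    ∫ x in {x | δ ≤ |x|}, x⁻¹ • g x = ∫ x in Ioi δ, x⁻¹ • (g x - g (-x)) := by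
  have hs : MeasurableSet {x : ℝ | δ ≤ |x|} := measurableSet_le measurable_const measurable_abs
  have hint : IntegrableOn (fun x => x⁻¹ • g x) {x | δ ≤ |x|} := by
    refine Integrable.mono' (hg.norm.const_mul δ⁻¹).integrableOn
      (measurable_inv.aestronglyMeasurable.smul hg.aestronglyMeasurable).restrict ?_
    filter_upwards [ae_restrict_mem hs] with x (hx : δ ≤ |x|)
    rw [norm_smul, norm_inv, Real.norm_eq_abs]
    exact mul_le_mul_of_nonneg_right (inv_anti₀ hδ hx) (norm_nonneg _)
  rw [← integral_indicator hs,
    integral_eq_integral_Ioi_add_comp_neg (hint.integrable_indicator hs),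
    ← integral_Ici_eq_integral_Ioi (x := δ), ← inter_eq_right.2 (Ici_subset_Ioi.2 hδ),
    ← setIntegral_indicator measurableSet_Ici]
  refine setIntegral_congr_fun measurableSet_Ioi fun x (hx : 0 < x) => ?_
  by_cases hδx : δ ≤ x
  · simp [indicator, abs_of_pos hx, hδx, sub_eq_add_neg]
  · simp [indicator, abs_of_pos hx, hδx]

theorem tendsto_setIntegral_le_abs_inv_smul {g : ℝ → E} (hg : Integrable g)
    (hodd : IntegrableOn (fun x => x⁻¹ • (g x - g (-x))) (Ioi 0)) :
    Tendsto (fun δ => ∫ x in {x | δ ≤ |x|}, x⁻¹ • g x) (𝓝[>] 0)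
      (𝓝 (∫ x in Ioi 0, x⁻¹ • (g x - g (-x)))) := by
  refine (hodd.continuousWithinAt_Ici_primitive_Ioi.mono Ioi_subset_Ici_self).tendsto.congr' ?_
  filter_upwards [self_mem_nhdsWithin] with δ hδ
  exact (setIntegral_le_abs_inv_smul_eq hg hδ).symm

/-- For every Schwartz function `φ : ℝ² → ℂ`,
`lim_{ε→0⁺} ε ∫_{ℝ²} x φ(x,y)/((x²+ε²)(y²+ε²)) dx dy = π · PVℓ(φ)`,
where `PVℓ(φ) = lim_{δ→0⁺} ∫_{|x|≥δ} φ(x,0)/x dx`. -/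
theorem pvl_term_limit (φ : SchwartzMap (ℝ × ℝ) ℂ) (L : ℂ)
    (hL : Filter.Tendsto
      (fun δ : ℝ => ∫ x in {x : ℝ | δ ≤ |x|}, φ (x, 0) / (x : ℂ))
      (𝓝[>] (0 : ℝ)) (𝓝 L)) :
    Filter.Tendsto
      (fun ε : ℝ =>
        (ε : ℂ) * ∫ x : ℝ, ∫ y : ℝ,
          (x : ℂ) * φ (x, y) / (((x ^ 2 + ε ^ 2 : ℝ) : ℂ) * ((y ^ 2 + ε ^ 2 : ℝ) : ℂ)))
      (𝓝[>] (0 : ℝ)) (𝓝 ((Real.pi : ℂ) * L)) := by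
  obtain ⟨C, hdecay⟩ := φ.exists_norm_le_mul_inv_one_add_sq_fst
  obtain ⟨C₁, hderiv⟩ := φ.exists_norm_fderiv_le
  have hb := norm_le_of_forall_norm_le_mul_inv_one_add_sq hdecay
  have hodd := norm_sub_comp_neg_fst_le φ.differentiable hderiv hdecay
  have hφ₀ : Integrable fun x => φ (x, 0) :=
    (integrable_inv_one_add_sq.const_mul C).mono' (by fun_prop)
      (ae_of_all _ fun x => hdecay (x, 0))
  have hPV : L = ∫ x in Ioi 0, x⁻¹ • (φ (x, 0) - φ (-x, 0)) := by
    refine tendsto_nhds_unique ?_ (tendsto_setIntegral_le_abs_inv_smul hφ₀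
      (integrableOn_inv_smul_sub_comp_neg (by fun_prop) fun x => hodd x 0))
    simpa only [div_eq_inv_mul, ← Complex.ofReal_inv, ← Complex.real_smul] using hL
  rw [hPV, ← Complex.real_smul]
  refine (tendsto_integral_Ioi_smul_cauchyMean_sub_comp_neg φ.continuous hb hodd).congr' ?_
  filter_upwards [self_mem_nhdsWithin] with ε (hε : 0 < ε)
  rw [← smul_integral_integral_eq_integral_Ioi_cauchyMean φ.continuous hdecay hε]
  simp only [Complex.real_smul, Complex.ofReal_div, Complex.ofReal_mul, mul_div_right_comm]
end

section
/- Let (c_k)_{k∈ℕ} be nonnegative real numbers with b := Σ_{k} c_k < ∞, and let x be a real number with b x² < 1. Let J₀ denote the Bessel function of order zero, J₀(z) = (1/π) ∫₀^π cos(z sin θ) dθ. Then the family k ↦ J₀(2√(c_k) x) is multipliable, and its product P = ∏_k J₀(2√(c_k) x) satisfies |P/(1 − b x²) − 1| ≤ b² x⁴ / (2 (1 − b x²)²). -/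
/-- The Bessel function of order zero, `J₀(z) = (1/π) ∫₀^π cos(z sin θ) dθ`. -/
noncomputable def besselJ0 (z : ℝ) : ℝ :=
  (1 / Real.pi) * ∫ θ in (0 : ℝ)..Real.pi, Real.cos (z * Real.sin θ)

/-!
Put `t = z² / 4`. Integrating `1 - u²/2 ≤ cos u ≤ 1 - u²/2 + u⁴/24` at `u = z sin θ`, with
`∫₀^π sin² = π/2` and `∫₀^π sin⁴ = 3π/8`, gives `1 - t ≤ J₀(z) ≤ (1 - t/2)² ≤ exp(-t)`.
For `t_k = c_k x²` and `s = Σ t_k = b x²`, the Weierstrass product inequality and the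
exponential bound then sandwich the product: `1 - s ≤ ∏ J₀(2√c_k x) ≤ exp(-s) ≤ 1 - s + s²/2`.
-/

open Real Filter Topology intervalIntegral

namespace Real

theorem cos_le_one_sub_sq_div_two_add_pow_four_div (x : ℝ) :
    cos x ≤ 1 - x ^ 2 / 2 + x ^ 4 / 24 := by
  wlog hx : 0 ≤ x generalizing x
  · simpa [Even.neg_pow (by decide : Even 4)] using this (-x) (by linarith)
  have h_poly : ∫ t in (0 : ℝ)..x, (t - t ^ 3 / 6) = x ^ 2 / 2 - x ^ 4 / 24 := by
    rw [integral_sub (Continuous.intervalIntegrable (by fun_prop) _ _)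
      (Continuous.intervalIntegrable (by fun_prop) _ _), integral_div, integral_pow, integral_id]
    ring
  have h_mono : ∫ t in (0 : ℝ)..x, (t - t ^ 3 / 6) ≤ ∫ t in (0 : ℝ)..x, sin t :=
    integral_mono_on hx (Continuous.intervalIntegrable (by fun_prop) _ _)
      (Continuous.intervalIntegrable (by fun_prop) _ _) fun t ht => sin_ge_sub_cube ht.1
  rw [integral_sin, cos_zero] at h_mono
  linarith

theorem integral_sin_sq_zero_pi : ∫ θ in (0 : ℝ)..π, sin θ ^ 2 = π / 2 := by
  simp [integral_sin_sq]

theorem integral_sin_pow_four_zero_pi : ∫ θ in (0 : ℝ)..π, sin θ ^ 4 = 3 * π / 8 := by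
  have := integral_sin_pow_even (n := 2)
  norm_num [Finset.prod_range_succ] at this
  rw [this]
  ring

end Real

theorem pi_mul_besselJ0 (z : ℝ) : π * besselJ0 z = ∫ θ in (0 : ℝ)..π, cos (z * sin θ) := by
  rw [besselJ0, ← mul_assoc, mul_one_div_cancel pi_ne_zero, one_mul]

theorem one_sub_sq_div_four_le_besselJ0 (z : ℝ) : 1 - z ^ 2 / 4 ≤ besselJ0 z := by
  have h_poly : ∫ θ in (0 : ℝ)..π, (1 - z ^ 2 / 2 * sin θ ^ 2) = π * (1 - z ^ 2 / 4) := by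
    rw [integral_sub (Continuous.intervalIntegrable (by fun_prop) _ _)
        (Continuous.intervalIntegrable (by fun_prop) _ _),
      integral_const_mul, integral_sin_sq_zero_pi]
    simp only [integral_const, sub_zero, smul_eq_mul, mul_one]
    ring
  have h_mono : ∫ θ in (0 : ℝ)..π, (1 - z ^ 2 / 2 * sin θ ^ 2) ≤ π * besselJ0 z := by
    rw [pi_mul_besselJ0]
    refine integral_mono_on pi_pos.le (Continuous.intervalIntegrable (by fun_prop) _ _)
      (Continuous.intervalIntegrable (by fun_prop) _ _) fun θ _ => ?_
    linarith [one_sub_sq_div_two_le_cos (x := z * sin θ), mul_pow z (sin θ) 2]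
  rw [h_poly] at h_mono
  exact le_of_mul_le_mul_left h_mono pi_pos

theorem besselJ0_le (z : ℝ) : besselJ0 z ≤ 1 - z ^ 2 / 4 + z ^ 4 / 64 := by
  have h_poly : ∫ θ in (0 : ℝ)..π, (1 - z ^ 2 / 2 * sin θ ^ 2 + z ^ 4 / 24 * sin θ ^ 4) =
      π * (1 - z ^ 2 / 4 + z ^ 4 / 64) := by
    rw [integral_add (Continuous.intervalIntegrable (by fun_prop) _ _)
        (Continuous.intervalIntegrable (by fun_prop) _ _),
      integral_sub (Continuous.intervalIntegrable (by fun_prop) _ _)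
        (Continuous.intervalIntegrable (by fun_prop) _ _),
      integral_const_mul, integral_const_mul, integral_sin_sq_zero_pi,
      integral_sin_pow_four_zero_pi]
    simp only [integral_const, sub_zero, smul_eq_mul, mul_one]
    ring
  have h_mono : π * besselJ0 z ≤
      ∫ θ in (0 : ℝ)..π, (1 - z ^ 2 / 2 * sin θ ^ 2 + z ^ 4 / 24 * sin θ ^ 4) := by
    rw [pi_mul_besselJ0]
    refine integral_mono_on pi_pos.le (Continuous.intervalIntegrable (by fun_prop) _ _)
      (Continuous.intervalIntegrable (by fun_prop) _ _) fun θ _ => ?_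
    linarith [cos_le_one_sub_sq_div_two_add_pow_four_div (z * sin θ), mul_pow z (sin θ) 2,
      mul_pow z (sin θ) 4]
  rw [h_poly] at h_mono
  exact le_of_mul_le_mul_left h_mono pi_pos

theorem besselJ0_le_exp_neg_sq_div_four {z : ℝ} (hz : z ^ 2 ≤ 8) :
    besselJ0 z ≤ exp (-(z ^ 2 / 4)) := by
  set t := z ^ 2 / 4
  have ht : t ≤ 2 := by simp only [t]; linarith
  have h_half : 1 - t / 2 ≤ exp (-(t / 2)) := by linarith [add_one_le_exp (-(t / 2))]
  calc besselJ0 z ≤ 1 - z ^ 2 / 4 + z ^ 4 / 64 := besselJ0_le z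
    _ = (1 - t / 2) ^ 2 := by ring
    _ ≤ exp (-(t / 2)) ^ 2 := pow_le_pow_left₀ (by linarith) h_half 2
    _ = exp (-t) := by rw [← exp_nat_mul]; ring_nf

theorem Finset.one_sub_sum_le_prod_one_sub {ι R : Type*} [CommRing R] [LinearOrder R]
    [IsStrictOrderedRing R] (s : Finset ι) {t : ι → R} (h0 : ∀ i ∈ s, 0 ≤ t i)
    (h1 : ∀ i ∈ s, t i ≤ 1) : 1 - ∑ i ∈ s, t i ≤ ∏ i ∈ s, (1 - t i) := by
  induction s using Finset.cons_induction with
  | empty => simp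
  | cons a s ha ih =>
    simp only [Finset.mem_cons, forall_eq_or_imp] at h0 h1
    rw [Finset.prod_cons, Finset.sum_cons]
    have h_sum : 0 ≤ ∑ i ∈ s, t i := Finset.sum_nonneg h0.2
    have h_prod := mul_le_mul_of_nonneg_left (ih h0.2 h1.2) (sub_nonneg.2 h1.1)
    nlinarith [h0.1]

section ProductBounds

variable {ι : Type*} {f t : ι → ℝ}

theorem multipliable_of_one_sub_le_of_le_one (ht : Summable t) (hlow : ∀ k, 1 - t k ≤ f k)
    (hup : ∀ k, f k ≤ 1) : Multipliable f := by
  have h_dev : Summable fun k => f k - 1 :=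
    ht.of_norm_bounded fun k => by
      rw [Real.norm_eq_abs, abs_le]
      constructor <;> linarith [hlow k, hup k]
  simpa using Real.multipliable_one_add_of_summable h_dev

theorem one_sub_tsum_le_tprod (hf : Multipliable f) (ht : Summable t) (h0 : ∀ k, 0 ≤ t k)
    (h1 : ∀ k, t k ≤ 1) (hlow : ∀ k, 1 - t k ≤ f k) : 1 - ∑' k, t k ≤ ∏' k, f k :=
  ge_of_tendsto' hf.hasProd fun s => calc
    1 - ∑' k, t k ≤ 1 - ∑ k ∈ s, t k := by linarith [ht.sum_le_tsum s fun k _ => h0 k]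
    _ ≤ ∏ k ∈ s, (1 - t k) := s.one_sub_sum_le_prod_one_sub (fun k _ => h0 k) fun k _ => h1 k
    _ ≤ ∏ k ∈ s, f k :=
      Finset.prod_le_prod (fun k _ => sub_nonneg.2 (h1 k)) fun k _ => hlow k

theorem tprod_le_exp_neg_tsum (hf : Multipliable f) (ht : Summable t) (h0 : ∀ k, 0 ≤ f k)
    (hup : ∀ k, f k ≤ exp (-t k)) : ∏' k, f k ≤ exp (-∑' k, t k) :=
  le_of_tendsto_of_tendsto' hf.hasProd ht.hasSum.neg.rexp fun _ =>
    Finset.prod_le_prod (fun k _ => h0 k) fun k _ => hup k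

end ProductBounds

theorem exp_neg_le_one_sub_add_sq_div_two {s : ℝ} (hs : 0 ≤ s) :
    exp (-s) ≤ 1 - s + s ^ 2 / 2 := by
  -- `(1 - s + s²/2) (1 + s + s²/2) = 1 + s⁴/4 ≥ 1 = exp (-s) exp s`
  have h_inv : exp (-s) * exp s = 1 := by rw [← exp_add, neg_add_cancel, exp_zero]
  nlinarith [quadratic_le_exp_of_nonneg hs, exp_pos (-s), sq_nonneg s]

theorem abs_div_one_sub_sub_one_le {P s : ℝ} (hs0 : 0 ≤ s) (hs1 : s < 1) (hlow : 1 - s ≤ P)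
    (hup : P ≤ 1 - s + s ^ 2 / 2) : |P / (1 - s) - 1| ≤ s ^ 2 / (2 * (1 - s) ^ 2) := by
  have hpos : 0 < 1 - s := by linarith
  rw [div_sub_one hpos.ne', abs_of_nonneg (div_nonneg (by linarith) hpos.le),
    div_le_div_iff₀ hpos (by positivity)]
  nlinarith [mul_le_mul_of_nonneg_right (by linarith : P - (1 - s) ≤ s ^ 2 / 2)
    (by positivity : 0 ≤ 2 * (1 - s) ^ 2), mul_nonneg (mul_nonneg (sq_nonneg s) hs0) hpos.le]

theorem bessel_product_approximation_general {ι : Type*}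
    (c : ι → ℝ) (hc : ∀ k, 0 ≤ c k) (hsum : Summable c)
    (x : ℝ) (hx : (∑' k, c k) * x ^ 2 < 1) :
    Multipliable (fun k => besselJ0 (2 * Real.sqrt (c k) * x)) ∧
    |(∏' k, besselJ0 (2 * Real.sqrt (c k) * x)) / (1 - (∑' k, c k) * x ^ 2) - 1| ≤
      (∑' k, c k) ^ 2 * x ^ 4 / (2 * (1 - (∑' k, c k) * x ^ 2) ^ 2) := by
  set s := (∑' k, c k) * x ^ 2
  have ht : Summable fun k => c k * x ^ 2 := hsum.mul_right _
  have hs : ∑' k, c k * x ^ 2 = s := tsum_mul_right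
  have ht0 k : 0 ≤ c k * x ^ 2 := mul_nonneg (hc k) (sq_nonneg x)
  have ht_le k : c k * x ^ 2 ≤ s := hs ▸ ht.le_tsum k fun j _ => ht0 j
  have hz k : (2 * √(c k) * x) ^ 2 / 4 = c k * x ^ 2 := by
    rw [mul_pow, mul_pow, sq_sqrt (hc k)]
    ring
  have hlow k : 1 - c k * x ^ 2 ≤ besselJ0 (2 * √(c k) * x) :=
    hz k ▸ one_sub_sq_div_four_le_besselJ0 _
  have hup k : besselJ0 (2 * √(c k) * x) ≤ exp (-(c k * x ^ 2)) :=
    hz k ▸ besselJ0_le_exp_neg_sq_div_four (by linarith [hz k, ht_le k])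
  have hmult := multipliable_of_one_sub_le_of_le_one ht hlow fun k =>
    (hup k).trans (exp_le_one_iff.2 (by linarith [ht0 k]))
  refine ⟨hmult, ?_⟩
  rw [show (∑' k, c k) ^ 2 * x ^ 4 = s ^ 2 by ring]
  have hs0 : 0 ≤ s := hs ▸ tsum_nonneg ht0
  refine abs_div_one_sub_sub_one_le hs0 hx ?_ ?_
  · exact hs ▸ one_sub_tsum_le_tprod hmult ht ht0 (fun k => by linarith [ht_le k]) hlow
  · calc ∏' k, besselJ0 (2 * √(c k) * x) ≤ exp (-s) :=
        hs ▸ tprod_le_exp_neg_tsum hmult ht (fun k => by linarith [hlow k, ht_le k]) hup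
      _ ≤ 1 - s + s ^ 2 / 2 := exp_neg_le_one_sub_add_sq_div_two hs0

/-- Let `(c_k)` be nonnegative reals with `b := Σ c_k < ∞` and let `x` be a
real number with `b x² < 1`.  Then the family `k ↦ J₀(2√(c_k) x)` is multipliable, and its
product `P` satisfies `|P/(1 − b x²) − 1| ≤ b² x⁴ / (2(1 − b x²)²)`. -/
theorem bessel_product_approximation {ι : Type*} [Countable ι]
    (c : ι → ℝ) (hc : ∀ k, 0 ≤ c k) (hsum : Summable c)
    (x : ℝ) (hx : (∑' k, c k) * x ^ 2 < 1) :
    Multipliable (fun k => besselJ0 (2 * Real.sqrt (c k) * x)) ∧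
    |(∏' k, besselJ0 (2 * Real.sqrt (c k) * x)) / (1 - (∑' k, c k) * x ^ 2) - 1| ≤
      (∑' k, c k) ^ 2 * x ^ 4 / (2 * (1 - (∑' k, c k) * x ^ 2) ^ 2) :=
  bessel_product_approximation_general c hc hsum x hx
end
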